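/- arXiv:2304.10364 — 4 statements merged into one kernel-verified Lean document; each statement's English description precedes it below -/
import Mathlib

section
/- For Hermitian J, the free partition function Z_free[J] = ∫ DΦ exp(−V tr(EΦ² + ½MΦMΦ) + V tr(JΦ)) equals C′ · exp((V/2) ∑_{m,n=1}^{N} J_{mn} J_{nm} / (E_{n−1} + E_{m−1} + √(E_{n−1} E_{m−1}))), where C′ = (∏_{n=1}^{N} √(2π/(3V E_{n−1}))) · (∏_{1≤n<m≤N} π/(V(E_{n−1} + E_{m−1} + √(E_{n−1} E_{m−1})))). -/
open MeasureTheory Matrix Polynomial BigOperators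

/-- Index set for the strictly-upper-triangular entries. -/
abbrev OffIdx (N : ℕ) := {p : Fin N × Fin N // p.1 < p.2}

/-- Real coordinates of a Hermitian matrix: the diagonal entries and the
(complex) strictly-upper-triangular entries. -/
abbrev HCoords (N : ℕ) := (Fin N → ℝ) × (OffIdx N → ℂ)

/-- The Hermitian matrix with the given coordinates. -/
noncomputable def hermOf {N : ℕ} (c : HCoords N) : Matrix (Fin N) (Fin N) ℂ :=
  Matrix.of fun i j =>
    if h : i < j then c.2 ⟨(i, j), h⟩
    else if h' : j < i then star (c.2 ⟨(j, i), h'⟩)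
    else (c.1 i : ℂ)

/-- The diagonal matrix `M = diag (√E_0, …, √E_{N-1})`. -/
noncomputable def Mmat (N : ℕ) (Ev : Fin N → ℝ) : Matrix (Fin N) (Fin N) ℂ :=
  Matrix.diagonal fun i => (Real.sqrt (Ev i) : ℂ)

/-- The diagonal matrix `E = diag (E_0, …, E_{N-1})`. -/
noncomputable def Emat (N : ℕ) (Ev : Fin N → ℝ) : Matrix (Fin N) (Fin N) ℂ :=
  Matrix.diagonal fun i => (Ev i : ℂ)

/-- The action `S[Φ] = V tr (EΦ² + κΦ + ½MΦMΦ + √λ MΦ³ + (λ/4)Φ⁴)`. -/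
noncomputable def action (N : ℕ) (Vc lam kap : ℝ) (Ev : Fin N → ℝ)
    (Φ : Matrix (Fin N) (Fin N) ℂ) : ℝ :=
  Vc * (Matrix.trace (Emat N Ev * Φ ^ 2 + (kap : ℂ) • Φ
      + (1 / 2 : ℂ) • (Mmat N Ev * Φ * Mmat N Ev * Φ)
      + ((Real.sqrt lam : ℝ) : ℂ) • (Mmat N Ev * Φ ^ 3)
      + ((lam : ℂ) / 4) • Φ ^ 4)).re

/-- The partition function `Z[J] = ∫ DΦ exp (−S[Φ] + V tr (JΦ))`. -/
noncomputable def Zfun (N : ℕ) (Vc lam kap : ℝ) (Ev : Fin N → ℝ)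
    (J : Matrix (Fin N) (Fin N) ℂ) : ℝ :=
  ∫ c : HCoords N,
    Real.exp (- action N Vc lam kap Ev (hermOf c)
      + Vc * (Matrix.trace (J * hermOf c)).re)

/-- `P(z) = ∫ℝ exp(−(λV/4)x⁴ + Vxz) dx`. -/
noncomputable def Pint (Vc lam : ℝ) (z : ℝ) : ℝ :=
  ∫ x : ℝ, Real.exp (- (lam * Vc / 4) * x ^ 4 + Vc * x * z)

/-- `P_N(s₁,…,s_N) = det (P^{(i−1)}(s_j))`. -/
noncomputable def PNdet (N : ℕ) (Vc lam : ℝ) (s : Fin N → ℝ) : ℝ :=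
  Matrix.det (Matrix.of fun i j : Fin N => iteratedDeriv (i : ℕ) (Pint Vc lam) (s j))

/-- The free action `S_free[Φ] = V tr (EΦ² + ½MΦMΦ)`. -/
noncomputable def freeAction (N : ℕ) (Vc : ℝ) (Ev : Fin N → ℝ)
    (Φ : Matrix (Fin N) (Fin N) ℂ) : ℝ :=
  Vc * (Matrix.trace (Emat N Ev * Φ ^ 2
      + (1 / 2 : ℂ) • (Mmat N Ev * Φ * Mmat N Ev * Φ))).re

/-!
For Hermitian `Φ` the free action is a weighted sum of the `|Φᵢⱼ|²`, and pairing the entry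
`(i, j)` with `(j, i)` turns the integrand into a product of one real Gaussian for each diagonal
coordinate and one complex Gaussian for each coordinate above the diagonal. The pair `{i, j}`
carries the weight `V (Eᵢ + Eⱼ + √(EᵢEⱼ))`, which is `3VEᵢ / 2` on the diagonal, and completing
the square in each Gaussian integral produces the prefactor and the exponential of the source
term `J`.
-/

open Finset ComplexConjugate Real
open scoped RealInnerProductSpace

theorem integral_exp_neg_mul_sq_add_mul {a : ℝ} (ha : 0 < a) (b : ℝ) :
    ∫ x : ℝ, rexp (-a * x ^ 2 + b * x) = √(π / a) * rexp (b ^ 2 / (4 * a)) := by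
  have h := integral_cexp_quadratic (b := -a) (by simpa using ha) b 0
  apply Complex.ofReal_injective
  rw [← integral_complex_ofReal]
  push_cast
  simp only [add_zero, zero_sub, neg_neg] at h
  rw [h, Real.sqrt_eq_rpow, Complex.ofReal_cpow (by positivity)]
  push_cast
  congr 2
  ring

theorem integral_exp_neg_mul_sq_norm_add_inner {V : Type*} [NormedAddCommGroup V]
    [InnerProductSpace ℝ V] [FiniteDimensional ℝ V] [MeasurableSpace V] [BorelSpace V]
    {a : ℝ} (ha : 0 < a) (w : V) :
    ∫ v : V, rexp (-a * ‖v‖ ^ 2 + ⟪w, v⟫) =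
      (π / a) ^ (Module.finrank ℝ V / 2 : ℝ) * rexp (‖w‖ ^ 2 / (4 * a)) := by
  have h := GaussianFourier.integral_cexp_neg_mul_sq_norm_add (b := a) (by simpa using ha) 1 w
  apply Complex.ofReal_injective
  rw [← integral_complex_ofReal]
  push_cast
  simp only [one_mul, one_pow] at h
  rw [h, Complex.ofReal_cpow (by positivity)]
  push_cast
  rfl

theorem Complex.integral_exp_neg_mul_norm_sq_add_re_mul {a : ℝ} (ha : 0 < a) (w : ℂ) :
    ∫ z : ℂ, rexp (-a * ‖z‖ ^ 2 + (w * z).re) = π / a * rexp (‖w‖ ^ 2 / (4 * a)) := by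
  have h := integral_exp_neg_mul_sq_norm_add_inner ha (conj w)
  simp only [Complex.inner, Complex.conj_conj, Complex.norm_conj, Complex.finrank_real_complex] at h
  simpa [mul_comm] using h

theorem integral_fintype_prod_mul_fintype_prod {𝕜 ι κ E F : Type*} [RCLike 𝕜]
    [Fintype ι] [Fintype κ] [MeasureSpace E] [MeasureSpace F]
    [SigmaFinite (volume : Measure E)] [SigmaFinite (volume : Measure F)]
    (f : ι → E → 𝕜) (g : κ → F → 𝕜) :
    ∫ c : (ι → E) × (κ → F), (∏ i, f i (c.1 i)) * ∏ k, g k (c.2 k)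
      = (∏ i, ∫ x, f i x) * ∏ k, ∫ y, g k y := by
  rw [Measure.volume_eq_prod, integral_prod_mul (fun x : ι → E => ∏ i, f i (x i))
      (fun y : κ → F => ∏ k, g k (y k)),
    integral_fintype_prod_volume_eq_prod, integral_fintype_prod_volume_eq_prod]

section PairSums

variable {ι M : Type*} [LinearOrder ι] [Fintype ι] [LocallyFiniteOrderTop ι]

@[to_additive]
theorem Fintype.prod_subtype_lt [CommMonoid M] (f : ι → ι → M) :
    ∏ p : {p : ι × ι // p.1 < p.2}, f p.1.1 p.1.2 = ∏ i, ∏ j ∈ Ioi i, f i j := by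
  rw [← prod_finset_product' {p : ι × ι | p.1 < p.2} univ Ioi (by simp),
    prod_subtype (p := fun p : ι × ι => p.1 < p.2) _ (by simp) (fun p => f p.1 p.2)]

theorem Fintype.sum_sum_eq_sum_diag_add_sum_lt [LocallyFiniteOrderBot ι] [AddCommMonoid M]
    (f : ι → ι → M) :
    ∑ i, ∑ j, f i j
      = ∑ i, f i i + ∑ p : {p : ι × ι // p.1 < p.2}, (f p.1.1 p.1.2 + f p.1.2 p.1.1) := by
  have hrow (i : ι) : ∑ j, f i j = f i i + (∑ j ∈ Ioi i, f i j + ∑ j ∈ Iio i, f i j) := by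
    rw [Fintype.sum_eq_add_sum_compl i, ← Ioi_disjUnion_Iio, sum_disjUnion]
  have hswap : ∑ i, ∑ j ∈ Iio i, f i j = ∑ i, ∑ j ∈ Ioi i, f j i :=
    sum_comm' (s := univ) (t := Iio) (t' := univ) (s' := Ioi) (by simp)
  rw [Fintype.sum_subtype_lt (fun i j => f i j + f j i)]
  simp_rw [hrow, sum_add_distrib, hswap]

end PairSums

namespace Matrix

variable {n : Type*} {Φ : Matrix n n ℂ}

theorem IsHermitian.apply_mul_apply_swap (hΦ : Φ.IsHermitian) (i j : n) :
    Φ i j * Φ j i = (‖Φ i j‖ ^ 2 : ℝ) := by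
  rw [← hΦ.apply j i, Complex.ofReal_pow, ← Complex.mul_conj']
  rfl

variable [Fintype n]

theorem re_trace_mul (J Φ : Matrix n n ℂ) :
    (trace (J * Φ)).re = ∑ i, ∑ j, (J j i * Φ i j).re := by
  rw [trace_mul_comm]
  simp only [trace, diag, mul_apply, Complex.re_sum, mul_comm]

variable [DecidableEq n]

theorem IsHermitian.re_trace_diagonal_mul_sq (hΦ : Φ.IsHermitian) (d : n → ℝ) :
    (trace (diagonal (fun i => (d i : ℂ)) * Φ ^ 2)).re = ∑ i, ∑ j, d i * ‖Φ i j‖ ^ 2 := by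
  rw [sq]
  simp only [trace, diag, diagonal_mul, Complex.re_sum]
  simp only [mul_apply, mul_sum, hΦ.apply_mul_apply_swap, ← Complex.ofReal_mul, Complex.ofReal_re,
    Complex.re_sum]

theorem IsHermitian.re_trace_diagonal_mul_mul_diagonal_mul (hΦ : Φ.IsHermitian) (d : n → ℝ) :
    (trace (diagonal (fun i => (d i : ℂ)) * Φ * diagonal (fun i => (d i : ℂ)) * Φ)).re
      = ∑ i, ∑ j, d i * d j * ‖Φ i j‖ ^ 2 := by
  set A := diagonal (fun i => (d i : ℂ)) * Φ with hA
  rw [Matrix.mul_assoc A, ← hA]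
  simp only [trace, diag, mul_apply, Complex.re_sum]
  simp only [hA, diagonal_mul, mul_mul_mul_comm _ (Φ _ _), hΦ.apply_mul_apply_swap,
    ← Complex.ofReal_mul, Complex.ofReal_re]

end Matrix

section HermOf

variable {N : ℕ} (c : HCoords N)

theorem hermOf_apply_self (i : Fin N) : hermOf c i i = c.1 i := by
  simp [hermOf]

theorem hermOf_apply_of_lt {i j : Fin N} (h : i < j) : hermOf c i j = c.2 ⟨(i, j), h⟩ := by
  simp [hermOf, h]

theorem hermOf_apply_of_gt {i j : Fin N} (h : j < i) :
    hermOf c i j = conj (c.2 ⟨(j, i), h⟩) := by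
  simp [hermOf, h, h.not_gt]

theorem isHermitian_hermOf : (hermOf c).IsHermitian := by
  ext i j
  rcases lt_trichotomy i j with h | rfl | h
  · simp [hermOf_apply_of_lt c h, hermOf_apply_of_gt c h]
  · simp [hermOf_apply_self]
  · simp [hermOf_apply_of_lt c h, hermOf_apply_of_gt c h]

theorem sum_sum_hermOf_apply {M : Type*} [AddCommMonoid M] (F : Fin N → Fin N → ℂ → M) :
    ∑ i, ∑ j, F i j (hermOf c i j)
      = ∑ i, F i i (c.1 i)
        + ∑ p : OffIdx N, (F p.1.1 p.1.2 (c.2 p) + F p.1.2 p.1.1 (conj (c.2 p))) := by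
  simp only [Fintype.sum_sum_eq_sum_diag_add_sum_lt, hermOf_apply_self]
  congr 1
  refine sum_congr rfl fun p _ => ?_
  rw [hermOf_apply_of_lt c p.2, hermOf_apply_of_gt c p.2]

end HermOf

-- For `i < j`, `V * kineticWeight E i j` is the coefficient of `|Φᵢⱼ|²` in the free action once
-- `Φᵢⱼ` and `Φⱼᵢ = conj Φᵢⱼ` are combined.
noncomputable def kineticWeight {ι : Type*} (Ev : ι → ℝ) (i j : ι) : ℝ :=
  Ev i + Ev j + √(Ev i * Ev j)

section KineticWeight

variable {ι : Type*} {Ev : ι → ℝ}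

theorem kineticWeight_comm (i j : ι) : kineticWeight Ev i j = kineticWeight Ev j i := by
  rw [kineticWeight, kineticWeight, add_comm (Ev i), mul_comm]

theorem kineticWeight_self {i : ι} (hi : 0 ≤ Ev i) : kineticWeight Ev i i = 3 * Ev i := by
  rw [kineticWeight, Real.sqrt_mul_self hi]
  ring

theorem kineticWeight_pos (hE : ∀ i, 0 < Ev i) (i j : ι) : 0 < kineticWeight Ev i j := by
  have := hE i; have := hE j
  unfold kineticWeight
  positivity

end KineticWeight

section FreeAction

variable {N : ℕ} (Vc : ℝ) (Ev : Fin N → ℝ)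

theorem freeAction_eq_sum {Φ : Matrix (Fin N) (Fin N) ℂ} (hΦ : Φ.IsHermitian) :
    freeAction N Vc Ev Φ = Vc * ∑ i, ∑ j, (Ev i + √(Ev i) * √(Ev j) / 2) * ‖Φ i j‖ ^ 2 := by
  have half : ((1 / 2 : ℂ) * (Mmat N Ev * Φ * Mmat N Ev * Φ).trace).re
      = 1 / 2 * (Mmat N Ev * Φ * Mmat N Ev * Φ).trace.re := by
    simp
  rw [freeAction, trace_add, trace_smul, Complex.add_re, smul_eq_mul, half, Emat, Mmat,
    hΦ.re_trace_diagonal_mul_sq, hΦ.re_trace_diagonal_mul_mul_diagonal_mul]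
  simp only [mul_sum, ← sum_add_distrib]
  exact sum_congr rfl fun i _ => sum_congr rfl fun j _ => by ring

theorem neg_freeAction_hermOf_add_re_trace (hE : ∀ i, 0 ≤ Ev i) {J : Matrix (Fin N) (Fin N) ℂ}
    (hJ : J.IsHermitian) (c : HCoords N) :
    -freeAction N Vc Ev (hermOf c) + Vc * (trace (J * hermOf c)).re
      = ∑ i, (-(Vc * kineticWeight Ev i i / 2) * c.1 i ^ 2 + Vc * (J i i).re * c.1 i)
        + ∑ p : OffIdx N, (-(Vc * kineticWeight Ev p.1.1 p.1.2) * ‖c.2 p‖ ^ 2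
            + (2 * Vc * J p.1.2 p.1.1 * c.2 p).re) := by
  have hsum : -freeAction N Vc Ev (hermOf c) + Vc * (trace (J * hermOf c)).re
      = ∑ i, ∑ j, (-(Vc * (Ev i + √(Ev i) * √(Ev j) / 2)) * ‖hermOf c i j‖ ^ 2
          + Vc * (J j i * hermOf c i j).re) := by
    rw [freeAction_eq_sum Vc Ev (isHermitian_hermOf c), re_trace_mul]
    simp only [mul_sum, ← sum_neg_distrib, ← sum_add_distrib, neg_mul, mul_assoc]
  rw [hsum, sum_sum_hermOf_apply c (fun i j z =>
    -(Vc * (Ev i + √(Ev i) * √(Ev j) / 2)) * ‖z‖ ^ 2 + Vc * (J j i * z).re)]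
  congr 1
  · refine sum_congr rfl fun i _ => ?_
    simp only [kineticWeight, Real.mul_self_sqrt (hE i), Real.sqrt_mul_self (hE i),
      Complex.norm_real, Real.norm_eq_abs, sq_abs, Complex.re_mul_ofReal]
    ring
  · refine sum_congr rfl fun p _ => ?_
    have hre : (star (J p.1.2 p.1.1) * conj (c.2 p)).re = (J p.1.2 p.1.1 * c.2 p).re := by
      rw [Complex.star_def, ← map_mul, Complex.conj_re]
    have h2 : (2 * Vc * J p.1.2 p.1.1 * c.2 p).re = 2 * Vc * (J p.1.2 p.1.1 * c.2 p).re := by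
      simp [mul_assoc]
    simp only [kineticWeight, Real.sqrt_mul (hE _), Complex.norm_conj, ← hJ.apply p.1.1 p.1.2,
      hre, h2]
    ring

theorem integral_exp_diagonal_mode (hV : 0 < Vc) {i : Fin N} (hi : 0 < Ev i)
    {J : Matrix (Fin N) (Fin N) ℂ} (hJ : J.IsHermitian) :
    ∫ x : ℝ, rexp (-(Vc * kineticWeight Ev i i / 2) * x ^ 2 + Vc * (J i i).re * x)
      = √(2 * π / (3 * Vc * Ev i))
        * rexp (Vc / 2 * ((J i i * J i i).re / kineticWeight Ev i i)) := by
  have hJii : ((J i i).re : ℂ) = J i i := Complex.conj_eq_iff_re.mp (hJ.apply i i)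
  have hJJ : (J i i * J i i).re = (J i i).re ^ 2 := by
    rw [← hJii]
    simp only [← Complex.ofReal_mul, Complex.ofReal_re, sq]
  have := hi.ne'
  rw [integral_exp_neg_mul_sq_add_mul (by rw [kineticWeight_self hi.le]; positivity), hJJ,
    kineticWeight_self hi.le]
  congr 2
  · field_simp
  · field_simp
    ring

theorem integral_exp_offDiagonal_mode (hV : 0 < Vc) {i j : Fin N} (hK : 0 < kineticWeight Ev i j)
    {J : Matrix (Fin N) (Fin N) ℂ} (hJ : J.IsHermitian) :
    ∫ z : ℂ, rexp (-(Vc * kineticWeight Ev i j) * ‖z‖ ^ 2 + (2 * Vc * J j i * z).re)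
      = π / (Vc * kineticWeight Ev i j)
        * rexp (Vc / 2 * ((J i j * J j i).re / kineticWeight Ev j i)
          + Vc / 2 * ((J j i * J i j).re / kineticWeight Ev i j)) := by
  have := hK.ne'
  have := hV.ne'
  rw [Complex.integral_exp_neg_mul_norm_sq_add_re_mul (mul_pos hV hK), kineticWeight_comm j,
    ← hJ.apply i j, Complex.star_def, Complex.conj_mul', Complex.mul_conj']
  simp only [norm_mul, Complex.norm_real, Complex.norm_ofNat, Real.norm_of_nonneg hV.le,
    ← Complex.ofReal_pow, Complex.ofReal_re]
  congr 2
  field_simp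
  ring

end FreeAction


theorem free_partition_function_general
    (N : ℕ) (Vc : ℝ) (hV : 0 < Vc)
    (Ev : Fin N → ℝ) (hE : ∀ i, 0 < Ev i)
    (J : Matrix (Fin N) (Fin N) ℂ) (hJ : J.IsHermitian) :
    (∫ c : HCoords N,
        Real.exp (- freeAction N Vc Ev (hermOf c)
          + Vc * (Matrix.trace (J * hermOf c)).re))
      = ((∏ n : Fin N, Real.sqrt (2 * Real.pi / (3 * Vc * Ev n)))
          * ∏ n : Fin N, ∏ m ∈ Finset.Ioi n,
              Real.pi / (Vc * (Ev n + Ev m + Real.sqrt (Ev n * Ev m))))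
        * Real.exp ((Vc / 2) * ∑ m : Fin N, ∑ n : Fin N,
            (J m n * J n m).re / (Ev n + Ev m + Real.sqrt (Ev n * Ev m))) := by
  simp_rw [neg_freeAction_hermOf_add_re_trace Vc Ev (fun i => (hE i).le) hJ, Real.exp_add,
    Real.exp_sum]
  rw [integral_fintype_prod_mul_fintype_prod
      (fun i x => rexp (-(Vc * kineticWeight Ev i i / 2) * x ^ 2 + Vc * (J i i).re * x))
      (fun (p : OffIdx N) z => rexp (-(Vc * kineticWeight Ev p.1.1 p.1.2) * ‖z‖ ^ 2
        + (2 * Vc * J p.1.2 p.1.1 * z).re)),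
    prod_congr rfl fun i _ => integral_exp_diagonal_mode Vc Ev hV (hE i) hJ,
    prod_congr rfl fun p _ => integral_exp_offDiagonal_mode Vc Ev hV (kineticWeight_pos hE _ _) hJ]
  simp only [mul_sum, kineticWeight]
  rw [Fintype.sum_sum_eq_sum_diag_add_sum_lt, exp_add, exp_sum, exp_sum, prod_mul_distrib,
    prod_mul_distrib, ← Fintype.prod_subtype_lt]
  exact mul_mul_mul_comm _ _ _ _

/-- The free partition function
`Z_free[J] = ∫ DΦ exp(−V tr(EΦ² + ½MΦMΦ) + V tr(JΦ))` equals
`C′ · exp((V/2) ∑_{m,n} J_{mn}J_{nm}/(E_{n−1}+E_{m−1}+√(E_{n−1}E_{m−1})))`. -/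
theorem free_partition_function
    (N : ℕ) (hN : 1 ≤ N) (Vc : ℝ) (hV : 0 < Vc)
    (Ev : Fin N → ℝ) (hE : ∀ i, 0 < Ev i)
    (J : Matrix (Fin N) (Fin N) ℂ) (hJ : J.IsHermitian) :
    (∫ c : HCoords N,
        Real.exp (- freeAction N Vc Ev (hermOf c)
          + Vc * (Matrix.trace (J * hermOf c)).re))
      = ((∏ n : Fin N, Real.sqrt (2 * Real.pi / (3 * Vc * Ev n)))
          * ∏ n : Fin N, ∏ m ∈ Finset.Ioi n,
              Real.pi / (Vc * (Ev n + Ev m + Real.sqrt (Ev n * Ev m))))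
        * Real.exp ((Vc / 2) * ∑ m : Fin N, ∑ n : Fin N,
            (J m n * J n m).re / (Ev n + Ev m + Real.sqrt (Ev n * Ev m))) :=
  free_partition_function_general N Vc hV Ev hE J hJ
end

section
/- Fix reals V > 0 and E > 0, and for λ > 0 set C′(λ) = √(π√λ/(3√V·E)) · exp(3VE²/(4λ)). Then, as λ → 0⁺, (1/C′(λ)) ∫_ℝ x²·exp(−(λV/4)x⁴ + Vx·E^{3/2}/√λ) dx − ( √2·E/(λ^{5/4}V^{1/4}) − 5/(18√2·λ^{1/4}·E·V^{5/4}) + 25λ^{3/4}/(1296√2·E³·V^{9/4}) ) = O(λ^{7/4}). -/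
/-!
Substituting `x = s (1 + ε u)`, where `s = √(E / λ)` is the critical point of the phase and
`ε = √λ / (√V E)`, turns the integral into `s³ ε e^{3/(4ε²)} J(ε)` with
`J(ε) = ∫ (1 + ε u)² exp(-(3/2) u² - w)`, `w = ε u³ + ε² u⁴ / 4`. Expanding `e^{-w}` to fifth
order and integrating the resulting polynomial against the Gaussian moments gives
`J(ε) = √(2π/3) (1 - 5ε²/36 + 25ε⁴/2592) + O(ε⁶)`. The Taylor remainder is at most
`|w|⁶ max(1, e^{-w})`, and `e^{-w}` is absorbed by the Gaussian because
`(3/2) u² + w = u²/2 + (u + ε u²/2)²`, so a single integrable majorant works for all `|ε| ≤ 1`.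
The prefactor is of order `λ^{-5/4}` and `ε⁶` of order `λ³`, whence the error `O(λ^{7/4})`.
-/

open MeasureTheory Filter Asymptotics Real Finset Topology

section GaussianMoments

variable {b : ℝ}

lemma integrable_pow_mul_exp_neg_mul_sq (hb : 0 < b) (n : ℕ) :
    Integrable fun x : ℝ => x ^ n * exp (-b * x ^ 2) := by
  simpa using integrable_rpow_mul_exp_neg_mul_sq hb (s := n) (by linarith [n.cast_nonneg (α := ℝ)])

lemma integrable_eval_mul_exp_neg_mul_sq (hb : 0 < b) (p : Polynomial ℝ) :
    Integrable fun x : ℝ => p.eval x * exp (-b * x ^ 2) := by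
  simp_rw [Polynomial.eval_eq_sum_range, sum_mul, mul_assoc]
  exact integrable_finsetSum _ fun n _ => (integrable_pow_mul_exp_neg_mul_sq hb n).const_mul _

lemma integral_pow_mul_exp_neg_mul_sq_of_odd {n : ℕ} (hn : Odd n) :
    ∫ x : ℝ, x ^ n * exp (-b * x ^ 2) = 0 := by
  have h := integral_neg_eq_self (fun x : ℝ => x ^ n * exp (-b * x ^ 2)) volume
  simp only [hn.neg_pow, neg_sq, neg_mul, integral_neg] at h ⊢
  linarith

lemma integral_pow_add_two_mul_exp_neg_mul_sq (hb : 0 < b) (n : ℕ) :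
    ∫ x : ℝ, x ^ (n + 2) * exp (-b * x ^ 2)
      = (n + 1) / (2 * b) * ∫ x : ℝ, x ^ n * exp (-b * x ^ 2) := by
  have hu (x : ℝ) : HasDerivAt (fun y => y ^ (n + 1)) ((n + 1) * x ^ n) x := by
    simpa using hasDerivAt_pow (n + 1) x
  have hv (x : ℝ) :
      HasDerivAt (fun y => exp (-b * y ^ 2)) (-2 * b * x * exp (-b * x ^ 2)) x := by
    convert ((hasDerivAt_pow 2 x).const_mul (-b)).exp using 1
    push_cast; ring
  have ibp := integral_mul_deriv_eq_deriv_mul_of_integrable (fun x _ => hu x) (fun x _ => hv x)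
    (((integrable_pow_mul_exp_neg_mul_sq hb (n + 2)).const_mul (-2 * b)).congr
      (.of_forall fun x => by simp only [Pi.mul_apply]; ring))
    (((integrable_pow_mul_exp_neg_mul_sq hb n).const_mul (n + 1)).congr
      (.of_forall fun x => by simp only [Pi.mul_apply]; ring))
    (integrable_pow_mul_exp_neg_mul_sq hb (n + 1))
  have lhs : ∫ x : ℝ, x ^ (n + 1) * (-2 * b * x * exp (-b * x ^ 2))
      = -2 * b * ∫ x : ℝ, x ^ (n + 2) * exp (-b * x ^ 2) := by
    rw [← integral_const_mul]; congr 1; ext x; ring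
  have rhs : ∫ x : ℝ, (n + 1) * x ^ n * exp (-b * x ^ 2)
      = (n + 1) * ∫ x : ℝ, x ^ n * exp (-b * x ^ 2) := by
    rw [← integral_const_mul]; congr 1; ext x; ring
  rw [lhs, rhs] at ibp
  rw [div_mul_eq_mul_div, eq_div_iff (by positivity)]
  linarith

/-- The moments `E[X ^ n]` of a centred normal variable `X` of variance `1 / (2 b)`. -/
noncomputable def normalizedGaussMoment (b : ℝ) : ℕ → ℝ
  | 0 => 1
  | 1 => 0
  | n + 2 => (n + 1) / (2 * b) * normalizedGaussMoment b n

lemma integral_pow_mul_exp_neg_mul_sq (hb : 0 < b) (n : ℕ) :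
    ∫ x : ℝ, x ^ n * exp (-b * x ^ 2) = √(π / b) * normalizedGaussMoment b n := by
  induction n using normalizedGaussMoment.induct with
  | case1 => simpa [normalizedGaussMoment] using integral_gaussian b
  | case2 => simpa [normalizedGaussMoment] using
      integral_pow_mul_exp_neg_mul_sq_of_odd (b := b) odd_one
  | case3 n ih => rw [integral_pow_add_two_mul_exp_neg_mul_sq hb, ih, normalizedGaussMoment]; ring

end GaussianMoments

lemma hasDerivAt_sum_range_pow_div_factorial (n : ℕ) (x : ℝ) :
    HasDerivAt (fun t : ℝ => ∑ m ∈ range (n + 1), t ^ m / m.factorial)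
      (∑ m ∈ range n, x ^ m / m.factorial) x := by
  induction n with
  | zero => simpa using hasDerivAt_const x (1 : ℝ)
  | succ n ih =>
    refine HasDerivAt.congr_of_eventuallyEq ((ih.add ((hasDerivAt_pow (n + 1) x).div_const
      ((n + 1).factorial : ℝ))).congr_deriv ?_) (.of_forall fun t => sum_range_succ _ _)
    rw [sum_range_succ, Nat.factorial_succ, Nat.cast_mul]
    field_simp
    push_cast; ring

/-- Unlike the usual bound by `|x| ^ n * exp |x|`, this one stays small for large negative `x`. -/
lemma abs_exp_sub_sum_le_pow_mul_exp_max (n : ℕ) (x : ℝ) :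
    |exp x - ∑ m ∈ range n, x ^ m / m.factorial| ≤ |x| ^ n * exp (max x 0) := by
  induction n generalizing x with
  | zero => simp [abs_of_pos (exp_pos x)]
  | succ n ih =>
    have hderiv (t : ℝ) : HasDerivAt (fun t => exp t - ∑ m ∈ range (n + 1), t ^ m / m.factorial)
        (exp t - ∑ m ∈ range n, t ^ m / m.factorial) t :=
      (hasDerivAt_exp t).sub (hasDerivAt_sum_range_pow_div_factorial n t)
    have hbound : ∀ t ∈ Set.uIcc 0 x,
        ‖exp t - ∑ m ∈ range n, t ^ m / m.factorial‖ ≤ |x| ^ n * exp (max x 0) := by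
      intro t ht
      have ht' : |t| ≤ |x| ∧ max t 0 ≤ max x 0 := by
        rcases Set.mem_uIcc.1 ht with ⟨h0, h1⟩ | ⟨h0, h1⟩
        · exact ⟨abs_le_abs h1 (by linarith), max_le_max h1 le_rfl⟩
        · exact ⟨abs_le_abs_of_nonpos h1 h0,
            max_le (h1.trans (le_max_right _ _)) (le_max_right _ _)⟩
      calc _ ≤ |t| ^ n * exp (max t 0) := ih t
        _ ≤ |x| ^ n * exp (max x 0) := by
          gcongr ?_ * exp ?_
          exacts [pow_le_pow_left₀ (abs_nonneg t) ht'.1 n, ht'.2]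
    have hmvt := Convex.norm_image_sub_le_of_norm_hasDerivWithin_le
      (fun t _ => (hderiv t).hasDerivWithinAt) hbound (convex_uIcc 0 x)
      Set.left_mem_uIcc Set.right_mem_uIcc
    have h0 : ∑ m ∈ range (n + 1), (0 : ℝ) ^ m / m.factorial = 1 := by
      simp [sum_range_succ']
    simpa [h0, pow_succ, mul_right_comm] using hmvt

/-- After the rescaling `x = s (1 + ε u)`, the quartic phase becomes
`3 / (4 ε ^ 2) - (3/2) u ^ 2 - saddlePerturbation ε u`. -/
noncomputable def saddlePerturbation (ε u : ℝ) : ℝ := ε * u ^ 3 + ε ^ 2 * u ^ 4 / 4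

noncomputable def saddleIntegrand (ε u : ℝ) : ℝ :=
  (1 + ε * u) ^ 2 * exp (-(3/2) * u ^ 2 - saddlePerturbation ε u)

noncomputable def saddleIntegral (ε : ℝ) : ℝ := ∫ u : ℝ, saddleIntegrand ε u

noncomputable def saddleTaylor (ε u : ℝ) : ℝ :=
  (1 + ε * u) ^ 2 * ∑ k ∈ range 6, (-saddlePerturbation ε u) ^ k / k.factorial

noncomputable def saddleTaylorCoeff (ε : ℝ) : Fin 23 → ℝ :=
  ![1, 2 * ε, ε ^ 2, -ε, -9/4 * ε ^ 2, -3/2 * ε ^ 3, ε ^ 2 / 2 - ε ^ 4 / 4, 5/4 * ε ^ 3,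
    33/32 * ε ^ 4, -ε ^ 3 / 6 + 5/16 * ε ^ 5, -11/24 * ε ^ 4 + ε ^ 6 / 32, -43/96 * ε ^ 5,
    ε ^ 4 / 24 - 73/384 * ε ^ 6, ε ^ 5 / 8 - 7/192 * ε ^ 7, 9/64 * ε ^ 6 - ε ^ 8 / 384,
    -ε ^ 5 / 120 + 29/384 * ε ^ 7, -13/480 * ε ^ 6 + 43/2048 * ε ^ 8,
    -11/320 * ε ^ 7 + 3/1024 * ε ^ 9, -17/768 * ε ^ 8 + ε ^ 10 / 6144, -49/6144 * ε ^ 9,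
    -67/40960 * ε ^ 10, -11/61440 * ε ^ 11, -ε ^ 12 / 122880]

lemma saddleTaylor_eq_sum (ε u : ℝ) :
    saddleTaylor ε u = ∑ n : Fin 23, saddleTaylorCoeff ε n * u ^ (n : ℕ) := by
  simp [saddleTaylor, saddlePerturbation, saddleTaylorCoeff, Fin.sum_univ_succ, sum_range_succ,
    Nat.factorial]
  ring

lemma integrable_saddleTaylor_mul_exp (ε : ℝ) :
    Integrable fun u => saddleTaylor ε u * exp (-(3/2) * u ^ 2) := by
  simp_rw [saddleTaylor_eq_sum, sum_mul, mul_assoc]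
  exact integrable_finsetSum _ fun n _ =>
    (integrable_pow_mul_exp_neg_mul_sq (by norm_num) _).const_mul _

lemma integral_saddleTaylor_mul_exp (ε : ℝ) :
    ∫ u : ℝ, saddleTaylor ε u * exp (-(3/2) * u ^ 2)
      = √(π / (3/2)) * (1 - 5/36 * ε ^ 2 + 25/2592 * ε ^ 4)
        + ε ^ 6 * (√(π / (3/2)) * (-70525/31104 - 48413365/1492992 * ε ^ 2
          - 106611505/5971968 * ε ^ 4 - 11316305/17915904 * ε ^ 6)) := by
  simp_rw [saddleTaylor_eq_sum, sum_mul, mul_assoc]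
  rw [integral_finsetSum _ fun n _ =>
    (integrable_pow_mul_exp_neg_mul_sq (by norm_num) _).const_mul _]
  simp_rw [integral_const_mul, integral_pow_mul_exp_neg_mul_sq (b := 3/2) (by norm_num)]
  simp [Fin.sum_univ_succ, saddleTaylorCoeff, normalizedGaussMoment]
  ring

lemma one_add_mul_sq_le {ε : ℝ} (hε : |ε| ≤ 1) (u : ℝ) : (1 + ε * u) ^ 2 ≤ 2 * (1 + u ^ 2) := by
  have : ε ^ 2 ≤ 1 := by nlinarith [abs_nonneg ε, sq_abs ε]
  nlinarith [sq_nonneg (1 - ε * u), mul_le_mul_of_nonneg_right this (sq_nonneg u)]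

lemma abs_saddlePerturbation_pow_six_le {ε : ℝ} (hε : |ε| ≤ 1) (u : ℝ) :
    |saddlePerturbation ε u| ^ 6 ≤ ε ^ 6 * (8 * u ^ 18 * (1 + u ^ 2) ^ 3) := by
  have hsq : saddlePerturbation ε u ^ 2 ≤ ε ^ 2 * u ^ 6 * (2 * (1 + u ^ 2)) :=
    calc saddlePerturbation ε u ^ 2 = ε ^ 2 * u ^ 6 * (1 + ε * (u / 4)) ^ 2 := by
          unfold saddlePerturbation; ring
      _ ≤ ε ^ 2 * u ^ 6 * (2 * (1 + (u / 4) ^ 2)) := by gcongr; exact one_add_mul_sq_le hε _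
      _ ≤ ε ^ 2 * u ^ 6 * (2 * (1 + u ^ 2)) :=
          mul_le_mul_of_nonneg_left (by nlinarith [sq_nonneg u]) (by positivity)
  calc |saddlePerturbation ε u| ^ 6 = (saddlePerturbation ε u ^ 2) ^ 3 := by
        rw [Even.pow_abs (by decide), ← pow_mul]
    _ ≤ (ε ^ 2 * u ^ 6 * (2 * (1 + u ^ 2))) ^ 3 := by gcongr
    _ = ε ^ 6 * (8 * u ^ 18 * (1 + u ^ 2) ^ 3) := by ring

lemma exp_mul_exp_max_neg_saddlePerturbation_le (ε u : ℝ) :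
    exp (-(3/2) * u ^ 2) * exp (max (-saddlePerturbation ε u) 0) ≤ exp (-(1/2) * u ^ 2) := by
  rw [← exp_add, exp_le_exp]
  have : -saddlePerturbation ε u ≤ u ^ 2 := by
    unfold saddlePerturbation; nlinarith [sq_nonneg (u + ε * u ^ 2 / 2)]
  have := max_le this (sq_nonneg u)
  linarith

lemma abs_saddleIntegrand_sub_le {ε : ℝ} (hε : |ε| ≤ 1) (u : ℝ) :
    |saddleIntegrand ε u - saddleTaylor ε u * exp (-(3/2) * u ^ 2)|
      ≤ ε ^ 6 * (16 * (u ^ 18 * (1 + u ^ 2) ^ 4) * exp (-(1/2) * u ^ 2)) := by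
  set w := saddlePerturbation ε u
  have hfactor : saddleIntegrand ε u - saddleTaylor ε u * exp (-(3/2) * u ^ 2)
      = (1 + ε * u) ^ 2 * exp (-(3/2) * u ^ 2)
        * (exp (-w) - ∑ k ∈ range 6, (-w) ^ k / k.factorial) := by
    rw [saddleIntegrand, saddleTaylor, sub_eq_add_neg _ w, exp_add]; ring
  have htaylor := abs_exp_sub_sum_le_pow_mul_exp_max 6 (-w)
  rw [abs_neg] at htaylor
  rw [hfactor, abs_mul, abs_of_nonneg (by positivity)]
  calc (1 + ε * u) ^ 2 * exp (-(3/2) * u ^ 2)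
        * |exp (-w) - ∑ k ∈ range 6, (-w) ^ k / k.factorial|
      ≤ 2 * (1 + u ^ 2) * exp (-(3/2) * u ^ 2) * (|w| ^ 6 * exp (max (-w) 0)) := by
        gcongr
        exact one_add_mul_sq_le hε u
    _ = 2 * (1 + u ^ 2) * |w| ^ 6 * (exp (-(3/2) * u ^ 2) * exp (max (-w) 0)) := by ring
    _ ≤ 2 * (1 + u ^ 2) * (ε ^ 6 * (8 * u ^ 18 * (1 + u ^ 2) ^ 3)) * exp (-(1/2) * u ^ 2) := by
        gcongr
        · exact abs_saddlePerturbation_pow_six_le hε u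
        · exact exp_mul_exp_max_neg_saddlePerturbation_le ε u
    _ = ε ^ 6 * (16 * (u ^ 18 * (1 + u ^ 2) ^ 4) * exp (-(1/2) * u ^ 2)) := by ring

lemma exists_abs_saddleIntegral_sub_le : ∃ C, ∀ ε, |ε| ≤ 1 →
    |saddleIntegral ε - ∫ u : ℝ, saddleTaylor ε u * exp (-(3/2) * u ^ 2)| ≤ C * ε ^ 6 := by
  set B : ℝ → ℝ := fun u => 16 * (u ^ 18 * (1 + u ^ 2) ^ 4) * exp (-(1/2) * u ^ 2)
  have hB : Integrable B := by
    refine ((integrable_eval_mul_exp_neg_mul_sq (b := 1/2) (by norm_num)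
      (Polynomial.X ^ 18 * (1 + Polynomial.X ^ 2) ^ 4)).const_mul 16).congr
      (.of_forall fun u => ?_)
    simp [B, mul_assoc]
  refine ⟨∫ u, B u, fun ε hε => ?_⟩
  have hR : ∀ u, ‖saddleIntegrand ε u - saddleTaylor ε u * exp (-(3/2) * u ^ 2)‖ ≤ ε ^ 6 * B u :=
    abs_saddleIntegrand_sub_le hε
  have hD : Integrable fun u => saddleIntegrand ε u - saddleTaylor ε u * exp (-(3/2) * u ^ 2) :=
    (hB.const_mul (ε ^ 6)).mono'
      (by unfold saddleIntegrand saddleTaylor saddlePerturbation; fun_prop) (.of_forall hR)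
  have hT := integrable_saddleTaylor_mul_exp ε
  have hJ : Integrable (saddleIntegrand ε) :=
    (hD.add hT).congr (.of_forall fun u => sub_add_cancel _ _)
  rw [saddleIntegral, ← integral_sub hJ hT, mul_comm (∫ u, B u), ← integral_const_mul]
  exact norm_integral_le_of_norm_le (hB.const_mul _) (.of_forall hR)

lemma saddleIntegral_sub_isBigO :
    (fun ε => saddleIntegral ε - √(π / (3/2)) * (1 - 5/36 * ε ^ 2 + 25/2592 * ε ^ 4))
      =O[𝓝 0] fun ε => ε ^ 6 := by
  obtain ⟨C, hC⟩ := exists_abs_saddleIntegral_sub_le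
  have hremainder : (fun ε => saddleIntegral ε - ∫ u : ℝ, saddleTaylor ε u * exp (-(3/2) * u ^ 2))
      =O[𝓝 0] fun ε => ε ^ 6 := by
    refine .of_bound C ?_
    filter_upwards [Metric.closedBall_mem_nhds (0 : ℝ) one_pos] with ε hε
    rw [Real.norm_eq_abs, Real.norm_eq_abs, abs_of_nonneg (by positivity : (0 : ℝ) ≤ ε ^ 6)]
    exact hC ε (by simpa using hε)
  have htail : (fun ε : ℝ => ε ^ 6 * (√(π / (3/2)) * (-70525/31104 - 48413365/1492992 * ε ^ 2
      - 106611505/5971968 * ε ^ 4 - 11316305/17915904 * ε ^ 6))) =O[𝓝 0] fun ε => ε ^ 6 := by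
    simpa using (isBigO_refl (fun ε : ℝ => ε ^ 6) _).mul
      ((Continuous.tendsto (by fun_prop) 0).isBigO_one ℝ)
  refine (hremainder.add htail).congr_left fun ε => ?_
  rw [integral_saddleTaylor_mul_exp]; ring

/-- Laplace rescaling `x = s (1 + ε u)` around the critical point `s` of `-A x ^ 4 + B x`. -/
lemma integral_sq_mul_exp_quartic {A B s ε : ℝ} (hs : 0 < s) (hε : 0 < ε)
    (hA : 4 * A * ε ^ 2 * s ^ 4 = 1) (hB : B * ε ^ 2 * s = 1) :
    ∫ x : ℝ, x ^ 2 * exp (-A * x ^ 4 + B * x)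
      = s ^ 3 * ε * exp (3 / (4 * ε ^ 2)) * saddleIntegral ε := by
  have hA' : A = 1 / (4 * ε ^ 2 * s ^ 4) := by field_simp; linarith
  have hB' : B = 1 / (ε ^ 2 * s) := by field_simp; linarith
  have hpt (u : ℝ) : (s * ε * u + s) ^ 2 * exp (-A * (s * ε * u + s) ^ 4 + B * (s * ε * u + s))
      = s ^ 2 * exp (3 / (4 * ε ^ 2)) * saddleIntegrand ε u := by
    have harg : -A * (s * ε * u + s) ^ 4 + B * (s * ε * u + s)
        = 3 / (4 * ε ^ 2) + (-(3/2) * u ^ 2 - saddlePerturbation ε u) := by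
      rw [hA', hB', saddlePerturbation]; field_simp; ring
    rw [harg, exp_add, saddleIntegrand]; ring
  have hsub := Measure.integral_comp_mul_left
    (fun x => (x + s) ^ 2 * exp (-A * (x + s) ^ 4 + B * (x + s))) (s * ε)
  rw [integral_add_right_eq_self (fun x => x ^ 2 * exp (-A * x ^ 4 + B * x)) s] at hsub
  simp only [hpt, integral_const_mul, smul_eq_mul] at hsub
  rw [abs_of_pos (by positivity)] at hsub
  rw [saddleIntegral, show s ^ 3 * ε * exp (3 / (4 * ε ^ 2))
      = s * ε * (s ^ 2 * exp (3 / (4 * ε ^ 2))) by ring,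
    mul_assoc, hsub, ← mul_assoc, mul_inv_cancel₀ (by positivity), one_mul]

section Normalization

lemma exists_pos_pow_eq {x : ℝ} (hx : 0 < x) {n : ℕ} (hn : n ≠ 0) : ∃ y, 0 < y ∧ y ^ n = x :=
  ⟨x ^ (n⁻¹ : ℝ), by positivity, rpow_inv_natCast_pow hx.le hn⟩

lemma pow_rpow_of_mul_eq {x a : ℝ} (hx : 0 ≤ x) {k n : ℕ} (ha : k * a = n) :
    (x ^ k) ^ a = x ^ n := by
  rw [← rpow_natCast x k, ← rpow_mul hx, ha, rpow_natCast]

lemma sqrt_pow_four (y : ℝ) : √(y ^ 4) = y ^ 2 := by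
  rw [show y ^ 4 = (y ^ 2) ^ 2 by ring, sqrt_sq (sq_nonneg y)]

variable {V E lam : ℝ}

lemma quartic_integral_div_eq (hV : 0 < V) (hE : 0 < E) (hl : 0 < lam) :
    (∫ x : ℝ, x ^ 2 * exp (-(lam * V / 4) * x ^ 4 + V * x * (E ^ ((3 : ℝ) / 2) / √lam)))
        / (√(π * √lam / (3 * √V * E)) * exp (3 * V * E ^ 2 / (4 * lam)))
      = √2 * E / (lam ^ ((5 : ℝ) / 4) * V ^ ((1 : ℝ) / 4)) / √(π / (3/2))
        * saddleIntegral (√lam / (√V * E)) := by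
  obtain ⟨q, hq, rfl⟩ := exists_pos_pow_eq hl (n := 4) (by norm_num)
  obtain ⟨r, hr, rfl⟩ := exists_pos_pow_eq hV (n := 4) (by norm_num)
  obtain ⟨e, he, rfl⟩ := exists_pos_pow_eq hE (n := 2) (by norm_num)
  rw [sqrt_pow_four, sqrt_pow_four, pow_rpow_of_mul_eq hq.le (a := 5/4) (n := 5) (by norm_num),
    pow_rpow_of_mul_eq hr.le (a := 1/4) (n := 1) (by norm_num),
    pow_rpow_of_mul_eq he.le (a := 3/2) (n := 3) (by norm_num)]
  simp_rw [mul_right_comm (r ^ 4) _ (e ^ 3 / q ^ 2)]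
  rw [integral_sq_mul_exp_quartic (s := e / q ^ 2) (ε := q ^ 2 / (r ^ 2 * e ^ 2)) (by positivity)
    (by positivity) (by field_simp) (by field_simp)]
  have hsqrt : √(π * q ^ 2 / (3 * r ^ 2 * e ^ 2)) = √(π / (3/2)) * q / (√2 * r * e) := by
    rw [sqrt_eq_iff_mul_self_eq_of_pos (by positivity)]
    field_simp
    rw [sq_sqrt (by positivity), sq_sqrt (by positivity)]
    ring
  rw [hsqrt, show 3 / (4 * (q ^ 2 / (r ^ 2 * e ^ 2)) ^ 2) = 3 * r ^ 4 * (e ^ 2) ^ 2 / (4 * q ^ 4)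
    by field_simp]
  field_simp

lemma saddle_prefactor_mul_expansion_eq (hV : 0 < V) (hE : 0 < E) (hl : 0 < lam) :
    √2 * E / (lam ^ ((5 : ℝ) / 4) * V ^ ((1 : ℝ) / 4))
        * (1 - 5/36 * (√lam / (√V * E)) ^ 2 + 25/2592 * (√lam / (√V * E)) ^ 4)
      = √2 * E / (lam ^ ((5 : ℝ) / 4) * V ^ ((1 : ℝ) / 4))
        - 5 / (18 * √2 * lam ^ ((1 : ℝ) / 4) * E * V ^ ((5 : ℝ) / 4))
        + 25 * lam ^ ((3 : ℝ) / 4) / (1296 * √2 * E ^ 3 * V ^ ((9 : ℝ) / 4)) := by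
  obtain ⟨q, hq, rfl⟩ := exists_pos_pow_eq hl (n := 4) (by norm_num)
  obtain ⟨r, hr, rfl⟩ := exists_pos_pow_eq hV (n := 4) (by norm_num)
  rw [sqrt_pow_four, sqrt_pow_four, pow_rpow_of_mul_eq hq.le (a := 5/4) (n := 5) (by norm_num),
    pow_rpow_of_mul_eq hr.le (a := 1/4) (n := 1) (by norm_num),
    pow_rpow_of_mul_eq hq.le (a := 1/4) (n := 1) (by norm_num),
    pow_rpow_of_mul_eq hr.le (a := 5/4) (n := 5) (by norm_num),
    pow_rpow_of_mul_eq hq.le (a := 3/4) (n := 3) (by norm_num),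
    pow_rpow_of_mul_eq hr.le (a := 9/4) (n := 9) (by norm_num)]
  field_simp
  rw [sq_sqrt (by norm_num)]
  ring

lemma saddle_prefactor_mul_pow_six_eq (hV : 0 < V) (hE : 0 < E) (hl : 0 < lam) :
    √2 * E / (lam ^ ((5 : ℝ) / 4) * V ^ ((1 : ℝ) / 4)) / √(π / (3/2)) * (√lam / (√V * E)) ^ 6
      = √2 / (√(π / (3/2)) * V ^ ((13 : ℝ) / 4) * E ^ 5) * lam ^ ((7 : ℝ) / 4) := by
  obtain ⟨q, hq, rfl⟩ := exists_pos_pow_eq hl (n := 4) (by norm_num)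
  obtain ⟨r, hr, rfl⟩ := exists_pos_pow_eq hV (n := 4) (by norm_num)
  rw [sqrt_pow_four, sqrt_pow_four, pow_rpow_of_mul_eq hq.le (a := 5/4) (n := 5) (by norm_num),
    pow_rpow_of_mul_eq hr.le (a := 1/4) (n := 1) (by norm_num),
    pow_rpow_of_mul_eq hr.le (a := 13/4) (n := 13) (by norm_num),
    pow_rpow_of_mul_eq hq.le (a := 7/4) (n := 7) (by norm_num)]
  field_simp

end Normalization

/-- Saddle-point asymptotics of `∫ x² exp(−(λV/4)x⁴ + VxE^{3/2}/√λ)dx`: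
with `C′(λ) = √(π√λ/(3√V E)) exp(3VE²/(4λ))`, as `λ → 0⁺` the normalized integral equals
`√2 E/(λ^{5/4}V^{1/4}) − 5/(18√2 λ^{1/4} E V^{5/4})
  + 25λ^{3/4}/(1296√2 E³ V^{9/4}) + O(λ^{7/4})`. -/
theorem saddle_point_ddP
    (Vc E : ℝ) (hV : 0 < Vc) (hE : 0 < E) :
    (fun lam : ℝ =>
        (∫ x : ℝ, x ^ 2 * Real.exp (- (lam * Vc / 4) * x ^ 4
            + Vc * x * (E ^ ((3 : ℝ) / 2) / Real.sqrt lam)))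
          / (Real.sqrt (Real.pi * Real.sqrt lam / (3 * Real.sqrt Vc * E))
              * Real.exp (3 * Vc * E ^ 2 / (4 * lam)))
        - (Real.sqrt 2 * E / (lam ^ ((5 : ℝ) / 4) * Vc ^ ((1 : ℝ) / 4))
            - 5 / (18 * Real.sqrt 2 * lam ^ ((1 : ℝ) / 4) * E * Vc ^ ((5 : ℝ) / 4))
            + 25 * lam ^ ((3 : ℝ) / 4)
                / (1296 * Real.sqrt 2 * E ^ 3 * Vc ^ ((9 : ℝ) / 4))))
      =O[nhdsWithin 0 (Set.Ioi 0)] fun lam : ℝ => lam ^ ((7 : ℝ) / 4) := by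
  set P : ℝ → ℝ := fun lam =>
    √2 * E / (lam ^ ((5 : ℝ) / 4) * Vc ^ ((1 : ℝ) / 4)) / √(π / (3/2))
  set ε : ℝ → ℝ := fun lam => √lam / (√Vc * E)
  have hε : Tendsto ε (𝓝[>] 0) (𝓝 0) := by
    simpa [ε] using ((show Continuous ε by fun_prop).tendsto 0).mono_left nhdsWithin_le_nhds
  have hexpansion := (isBigO_refl P _).mul (saddleIntegral_sub_isBigO.comp_tendsto hε)
  refine (hexpansion.congr' ?_ ?_).trans (isBigO_const_mul_self
    (√2 / (√(π / (3/2)) * Vc ^ ((13 : ℝ) / 4) * E ^ 5)) (fun lam => lam ^ ((7 : ℝ) / 4)) _)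
  · filter_upwards [self_mem_nhdsWithin] with lam hl
    simp only [Function.comp, P, ε]
    rw [quartic_integral_div_eq hV hE hl, ← saddle_prefactor_mul_expansion_eq hV hE hl]
    field_simp
  · filter_upwards [self_mem_nhdsWithin] with lam hl
    exact saddle_prefactor_mul_pow_six_eq hV hE hl
end

section
/- For every Hermitian N×N matrix J, the partition function satisfies Z[J] = exp(−V tr(((3/(4λ))M³ − (κ/√λ)I + (1/√λ)J)·M)) · ∫ DX exp(−(λV/4) tr(X⁴)) · exp(V tr(((1/√λ)M³ − κI + J)·X)), where the integral on the right is over Hermitian N×N matrices X with the same coordinate Lebesgue measure DX. -/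
open MeasureTheory Matrix Polynomial BigOperators

set_option maxHeartbeats 1600000

lemma key_trace_aux {N : ℕ} (M X J : Matrix (Fin N) (Fin N) ℂ) (a t κ c1 c2 c3 : ℂ)
    (hat : a * t = 1) (hc1 : c1 = 3 * (t * t) / 4) (hc2 : c2 = κ * t) (hc3 : c3 = a * a / 4) :
    -(Matrix.trace ((M * M) * (X - t • M) ^ 2 + κ • (X - t • M)
        + (1 / 2 : ℂ) • (M * (X - t • M) * M * (X - t • M))
        + a • (M * (X - t • M) ^ 3) + c3 • (X - t • M) ^ 4))
      + Matrix.trace (J * (X - t • M))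
    = -(Matrix.trace ((c1 • M ^ 3 - c2 • (1 : Matrix (Fin N) (Fin N) ℂ) + t • J) * M))
      + (-(c3 * Matrix.trace (X ^ 4)) + Matrix.trace ((t • M ^ 3 - κ • (1 : Matrix (Fin N) (Fin N) ℂ) + J) * X)) := by
  subst hc1 hc2 hc3
  have h1 := Matrix.trace_mul_comm (M*M*X) M
  have h2 := Matrix.trace_mul_comm (M*X) (M*M)
  have h3 := Matrix.trace_mul_comm X (M*M*M)
  have h4 := Matrix.trace_mul_comm X (M*X*X)
  have h5 := Matrix.trace_mul_comm (X*X) (M*X)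
  have h6 := Matrix.trace_mul_comm (X*X*X) M
  have h7 := Matrix.trace_mul_comm X (M*M*X)
  have h8 := Matrix.trace_mul_comm (X*X) (M*M)
  have h9 := Matrix.trace_mul_comm (M*X*X) M
  have h10 := Matrix.trace_mul_comm X (M*X*M)
  simp only [mul_assoc] at h1 h2 h3 h4 h5 h6 h7 h8 h9 h10
  simp only [pow_succ, pow_zero, Matrix.one_mul, mul_sub, sub_mul, mul_add, add_mul,
    smul_mul_assoc, mul_smul_comm, smul_smul, smul_sub, smul_add,
    Matrix.trace_add, Matrix.trace_sub, Matrix.trace_smul, smul_eq_mul, Matrix.mul_one, mul_assoc,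
    h1, h2, h3, h4, h5, h6, h7, h8, h9, h10]
  generalize (M*(M*(M*M))).trace = T1
  generalize (M*(M*(M*X))).trace = T2
  generalize (M*(M*(X*X))).trace = T3
  generalize (M*(X*(M*X))).trace = T4
  generalize (M*(X*(X*X))).trace = T5
  generalize (X*(X*(X*X))).trace = T6
  generalize M.trace = T7
  generalize X.trace = T8
  generalize (J*X).trace = T9
  generalize (J*M).trace = T10
  linear_combination (-((((-1:ℂ) + a*t) * T3 + ((2:ℂ)*t + (-1:ℂ)*a*t^2) * T2
    + ((-3/4:ℂ)*t^2 + (1/4:ℂ)*a*t^3) * T1 + ((-1/2:ℂ) + (1/2:ℂ)*a*t) * T4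
    + ((-1:ℂ)*a) * T5))) * hat

/-- The translation `Φ = X − (1/√λ)M` gives, for every Hermitian `J`,
`Z[J] = exp(−V tr(((3/(4λ))M³ − (κ/√λ)I + (1/√λ)J)·M))
  · ∫ DX exp(−(λV/4)tr(X⁴)) exp(V tr(((1/√λ)M³ − κI + J)·X))`. -/
theorem partition_function_translation
    (N : ℕ) (hN : 1 ≤ N) (Vc lam kap : ℝ) (hV : 0 < Vc) (hlam : 0 < lam)
    (Ev : Fin N → ℝ) (hE : ∀ i, 0 < Ev i)
    (J : Matrix (Fin N) (Fin N) ℂ) (hJ : J.IsHermitian) :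
    Zfun N Vc lam kap Ev J
      = Real.exp (- Vc * (Matrix.trace
            ((((3 / (4 * lam) : ℝ) : ℂ) • (Mmat N Ev) ^ 3
              - ((kap / Real.sqrt lam : ℝ) : ℂ) • (1 : Matrix (Fin N) (Fin N) ℂ)
              + ((1 / Real.sqrt lam : ℝ) : ℂ) • J)
              * Mmat N Ev)).re)
        * ∫ c : HCoords N,
            Real.exp (- (lam * Vc / 4) * (Matrix.trace ((hermOf c) ^ 4)).re
              + Vc * (Matrix.trace
                  ((((1 / Real.sqrt lam : ℝ) : ℂ) • (Mmat N Ev) ^ 3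
                    - (kap : ℂ) • (1 : Matrix (Fin N) (Fin N) ℂ) + J)
                    * hermOf c)).re) := by
  have hsp : 0 < Real.sqrt lam := Real.sqrt_pos.mpr hlam
  have hs : Real.sqrt lam ≠ 0 := ne_of_gt hsp
  haveI : (volume : Measure (HCoords N)).IsAddHaarMeasure :=
    Measure.prod.instIsAddHaarMeasure volume volume
  have hat : ((Real.sqrt lam : ℝ) : ℂ) * ((1 / Real.sqrt lam : ℝ) : ℂ) = 1 := by
    rw [← Complex.ofReal_mul]
    rw [show Real.sqrt lam * (1 / Real.sqrt lam) = 1 by field_simp]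
    exact Complex.ofReal_one
  have hlamc : ((lam : ℂ)) = ((Real.sqrt lam : ℝ) : ℂ) * ((Real.sqrt lam : ℝ) : ℂ) := by
    rw [← Complex.ofReal_mul, Real.mul_self_sqrt hlam.le]
  have hE2 : Emat N Ev = Mmat N Ev * Mmat N Ev := by
    rw [Emat, Mmat, Matrix.diagonal_mul_diagonal]
    refine congrArg Matrix.diagonal (funext fun i => ?_)
    rw [← Complex.ofReal_mul, Real.mul_self_sqrt (hE i).le]
  have hc1 : ((3 / (4 * lam) : ℝ) : ℂ)
      = 3 * (((1 / Real.sqrt lam : ℝ) : ℂ) * ((1 / Real.sqrt lam : ℝ) : ℂ)) / 4 := by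
    have hr : (3 / (4 * lam) : ℝ) = 3 * ((1 / Real.sqrt lam) * (1 / Real.sqrt lam)) / 4 := by
      rw [one_div, ← mul_inv, Real.mul_self_sqrt hlam.le]
      ring
    rw [hr]
    push_cast
    ring
  have hc2 : ((kap / Real.sqrt lam : ℝ) : ℂ) = (kap : ℂ) * ((1 / Real.sqrt lam : ℝ) : ℂ) := by
    push_cast
    ring
  have hc3 : ((lam : ℂ) / 4) = ((Real.sqrt lam : ℝ) : ℂ) * ((Real.sqrt lam : ℝ) : ℂ) / 4 := by
    rw [← hlamc]
  set v : HCoords N := ((fun i => -((1 / Real.sqrt lam) * Real.sqrt (Ev i))), 0) with hv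
  have hshift : ∀ c : HCoords N,
      hermOf (c + v) = hermOf c - ((1 / Real.sqrt lam : ℝ) : ℂ) • Mmat N Ev := by
    intro c
    ext i j
    rcases lt_trichotomy i j with h | h | h
    · simp [hermOf, Mmat, hv, Matrix.diagonal_apply_ne _ (ne_of_lt h), h, not_lt_of_gt h]
    · subst h
      simp [hermOf, Mmat, hv, lt_irrefl, Matrix.diagonal_apply_eq]
      push_cast
      ring
    · simp [hermOf, Mmat, hv, Matrix.diagonal_apply_ne _ (ne_of_gt h), h, not_lt_of_gt h]
  have hexp : ∀ c : HCoords N,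
      - action N Vc lam kap Ev (hermOf c - ((1 / Real.sqrt lam : ℝ) : ℂ) • Mmat N Ev)
        + Vc * (Matrix.trace (J * (hermOf c - ((1 / Real.sqrt lam : ℝ) : ℂ) • Mmat N Ev))).re
      = (- Vc * (Matrix.trace
            ((((3 / (4 * lam) : ℝ) : ℂ) • (Mmat N Ev) ^ 3
              - ((kap / Real.sqrt lam : ℝ) : ℂ) • (1 : Matrix (Fin N) (Fin N) ℂ)
              + ((1 / Real.sqrt lam : ℝ) : ℂ) • J)
              * Mmat N Ev)).re)
        + (- (lam * Vc / 4) * (Matrix.trace ((hermOf c) ^ 4)).re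
            + Vc * (Matrix.trace
                ((((1 / Real.sqrt lam : ℝ) : ℂ) • (Mmat N Ev) ^ 3
                  - (kap : ℂ) • (1 : Matrix (Fin N) (Fin N) ℂ) + J)
                  * hermOf c)).re) := by
    intro c
    have hkey := key_trace_aux (Mmat N Ev) (hermOf c) J
      ((Real.sqrt lam : ℝ) : ℂ) ((1 / Real.sqrt lam : ℝ) : ℂ) (kap : ℂ)
      ((3 / (4 * lam) : ℝ) : ℂ) ((kap / Real.sqrt lam : ℝ) : ℂ) ((lam : ℂ) / 4)
      hat hc1 hc2 hc3
    have h := congrArg Complex.re hkey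
    have h4 : (((lam : ℂ) / 4) * Matrix.trace ((hermOf c) ^ 4)).re
        = lam / 4 * (Matrix.trace ((hermOf c) ^ 4)).re := by
      rw [show ((lam : ℂ) / 4) = ((lam / 4 : ℝ) : ℂ) by push_cast; ring,
        Complex.re_ofReal_mul]
    simp only [Complex.add_re, Complex.neg_re] at h
    rw [h4] at h
    simp only [action, hE2]
    linear_combination Vc * h
  calc Zfun N Vc lam kap Ev J
      = ∫ c : HCoords N, Real.exp (- action N Vc lam kap Ev (hermOf (c + v))
          + Vc * (Matrix.trace (J * hermOf (c + v))).re) := by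
        rw [Zfun]
        exact (integral_add_right_eq_self (fun c : HCoords N =>
          Real.exp (- action N Vc lam kap Ev (hermOf c)
            + Vc * (Matrix.trace (J * hermOf c)).re)) v).symm
    _ = ∫ c : HCoords N,
          Real.exp (- Vc * (Matrix.trace
            ((((3 / (4 * lam) : ℝ) : ℂ) • (Mmat N Ev) ^ 3
              - ((kap / Real.sqrt lam : ℝ) : ℂ) • (1 : Matrix (Fin N) (Fin N) ℂ)
              + ((1 / Real.sqrt lam : ℝ) : ℂ) • J)
              * Mmat N Ev)).re)
          * Real.exp (- (lam * Vc / 4) * (Matrix.trace ((hermOf c) ^ 4)).re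
              + Vc * (Matrix.trace
                  ((((1 / Real.sqrt lam : ℝ) : ℂ) • (Mmat N Ev) ^ 3
                    - (kap : ℂ) • (1 : Matrix (Fin N) (Fin N) ℂ) + J)
                    * hermOf c)).re) := by
        refine integral_congr_ae (Filter.Eventually.of_forall fun c => ?_)
        simp only [hshift, hexp, Real.exp_add]
    _ = _ := integral_const_mul _ _
end

section
/- For every Hermitian N×N matrix J, the function Φ ↦ exp(−S[Φ] + V tr(JΦ)), viewed as a function of the N² real coordinates (Φ_ii for 1 ≤ i ≤ N and Re Φ_ij, Im Φ_ij for i < j) of the Hermitian matrix Φ, is Lebesgue integrable on ℝ^{N²}; in particular the partition function Z[J] is a well-defined finite real number. -/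
open MeasureTheory Matrix Polynomial BigOperators

/-! For Hermitian `Φ` the quartic term is coercive: in the Frobenius norm,
`tr Φ⁴ = ‖Φ²‖² ≥ ‖Φ‖⁴ / N²`, while every other term of the exponent is `O(‖Φ‖ + ‖Φ‖³)` by
submultiplicativity. Hence the exponent is at most `C - α ‖Φ‖⁴`. Every real coordinate of `Φ` is
bounded by an entry, so the integrand is dominated by `exp (C - α ‖c‖⁴)`, which is integrable on
any finite-dimensional space. -/

namespace Matrix

section Frobenius

open scoped Matrix.Norms.Frobenius

variable {m n 𝕜 : Type*} [Fintype m] [Fintype n] [RCLike 𝕜]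

theorem norm_apply_le_frobenius_norm (A : Matrix m n 𝕜) (i : m) (j : n) : ‖A i j‖ ≤ ‖A‖ :=
  (PiLp.norm_apply_le (WithLp.toLp 2 (A i)) j).trans
    (PiLp.norm_apply_le (WithLp.toLp 2 fun i => WithLp.toLp 2 (A i)) i)

theorem norm_trace_le_card_mul_frobenius_norm (A : Matrix n n 𝕜) :
    ‖trace A‖ ≤ Fintype.card n * ‖A‖ :=
  calc ‖trace A‖ ≤ ∑ i, ‖A i i‖ := norm_sum_le _ _
    _ ≤ ∑ _i : n, ‖A‖ := Finset.sum_le_sum fun i _ => norm_apply_le_frobenius_norm A i i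
    _ = Fintype.card n * ‖A‖ := by simp

theorem re_trace_conjTranspose_mul_self (A : Matrix m n 𝕜) :
    RCLike.re (trace (Aᴴ * A)) = ‖A‖ ^ 2 := by
  rw [frobenius_norm_def, ← Real.sqrt_eq_rpow, Real.sq_sqrt (by positivity), Finset.sum_comm]
  simp only [trace, diag_apply, mul_apply, conjTranspose_apply, map_sum, RCLike.star_def,
    RCLike.conj_mul, Real.rpow_two]
  norm_cast

variable [DecidableEq n] {A : Matrix n n 𝕜}

theorem IsHermitian.re_trace_pow_four (hA : A.IsHermitian) :
    RCLike.re (trace (A ^ 4)) = ‖A ^ 2‖ ^ 2 := by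
  rw [← re_trace_conjTranspose_mul_self, (hA.pow 2).eq, ← pow_add]

theorem IsHermitian.frobenius_norm_sq_le (hA : A.IsHermitian) :
    ‖A‖ ^ 2 ≤ Fintype.card n * ‖A ^ 2‖ :=
  calc ‖A‖ ^ 2 = RCLike.re (trace (A ^ 2)) := by
        rw [← re_trace_conjTranspose_mul_self, hA.eq, sq]
    _ ≤ ‖trace (A ^ 2)‖ := RCLike.re_le_norm _
    _ ≤ Fintype.card n * ‖A ^ 2‖ := norm_trace_le_card_mul_frobenius_norm _

end Frobenius

end Matrix

theorem integrable_exp_neg_mul_norm_rpow {E : Type*} [NormedAddCommGroup E] [NormedSpace ℝ E]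
    [FiniteDimensional ℝ E] [MeasurableSpace E] [BorelSpace E] (μ : Measure E)
    [μ.IsAddHaarMeasure] {b p : ℝ} (hb : 0 < b) (hp : 0 < p) :
    Integrable (fun x => Real.exp (-b * ‖x‖ ^ p)) μ := by
  obtain hE | hE := subsingleton_or_nontrivial E
  · have : Finite E := Finite.of_subsingleton
    have h_const : (fun x : E => Real.exp (-b * ‖x‖ ^ p))
        = fun _ => Real.exp (-b * ‖(0 : E)‖ ^ p) :=
      funext fun x => by rw [Subsingleton.elim x 0]
    rw [h_const]
    exact integrable_const _
  · rw [integrable_fun_norm_addHaar μ (f := fun y => Real.exp (-b * y ^ p))]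
    have hs : (-1 : ℝ) < (Module.finrank ℝ E - 1 : ℕ) := by
      linarith [Nat.cast_nonneg (α := ℝ) (Module.finrank ℝ E - 1)]
    refine (integrableOn_rpow_mul_exp_neg_mul_rpow hs hp hb).congr_fun (fun y _ => ?_)
      measurableSet_Ioi
    simp only [Real.rpow_natCast, smul_eq_mul]

theorem exists_mul_add_le_add_mul_pow_four {B L : ℝ} (hB : 0 ≤ B) (hL : 0 < L) :
    ∃ C, ∀ r : ℝ, 0 ≤ r → B * (r + r ^ 2 + r ^ 3) ≤ C + L * r ^ 4 := by
  set T := max 1 (3 * B / L)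
  refine ⟨B * (T + T ^ 2 + T ^ 3), fun r hr => ?_⟩
  rcases le_total r T with hrT | hTr
  · have : r + r ^ 2 + r ^ 3 ≤ T + T ^ 2 + T ^ 3 := by gcongr
    nlinarith [pow_nonneg hr 4]
  · have h1 : 1 ≤ r := (le_max_left _ _).trans hTr
    have hBr : 3 * B ≤ L * r := (div_le_iff₀' hL).1 ((le_max_right _ _).trans hTr)
    have h_cube : r + r ^ 2 + r ^ 3 ≤ 3 * r ^ 3 := by
      nlinarith [pow_le_pow_right₀ h1 (show 1 ≤ 3 by norm_num),
        pow_le_pow_right₀ h1 (show 2 ≤ 3 by norm_num)]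
    nlinarith [mul_le_mul_of_nonneg_right hBr (pow_nonneg hr 3),
      show 0 ≤ B * (T + T ^ 2 + T ^ 3) by positivity]

instance HCoords.isAddHaarMeasure_volume (N : ℕ) :
    (volume : Measure (HCoords N)).IsAddHaarMeasure := by
  rw [Measure.volume_eq_prod]
  exact Measure.prod.instIsAddHaarMeasure _ _

theorem hermOf_isHermitian {N : ℕ} (c : HCoords N) : (hermOf c).IsHermitian := by
  ext i j
  rcases lt_trichotomy i j with h | rfl | h
  · simp [hermOf, h, asymm h]
  · simp [hermOf]
  · simp [hermOf, h, asymm h]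

theorem continuous_hermOf {N : ℕ} : Continuous (hermOf : HCoords N → _) := by
  refine continuous_matrix fun i j => ?_
  simp only [hermOf, Matrix.of_apply]
  split_ifs <;> fun_prop

noncomputable def actionLowerOrder (N : ℕ) (lam kap : ℝ) (Ev : Fin N → ℝ)
    (Φ : Matrix (Fin N) (Fin N) ℂ) : Matrix (Fin N) (Fin N) ℂ :=
  Emat N Ev * Φ ^ 2 + (kap : ℂ) • Φ + (1 / 2 : ℂ) • (Mmat N Ev * Φ * Mmat N Ev * Φ)
    + (Real.sqrt lam : ℂ) • (Mmat N Ev * Φ ^ 3)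

section Exponent

variable {N : ℕ} (Vc lam kap : ℝ) (Ev : Fin N → ℝ) (J : Matrix (Fin N) (Fin N) ℂ)

theorem action_eq (Φ : Matrix (Fin N) (Fin N) ℂ) :
    action N Vc lam kap Ev Φ
      = Vc * (trace (actionLowerOrder N lam kap Ev Φ)).re + Vc * lam / 4 * (trace (Φ ^ 4)).re := by
  have h4 : (lam : ℂ) / 4 = ((lam / 4 : ℝ) : ℂ) := by push_cast; ring
  rw [action, actionLowerOrder, trace_add _ (_ • _), trace_smul, h4, Complex.add_re, smul_eq_mul,
    Complex.re_ofReal_mul]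
  ring

theorem continuous_exp_neg_action_add :
    Continuous (fun c : HCoords N =>
      Real.exp (- action N Vc lam kap Ev (hermOf c) + Vc * (trace (J * hermOf c)).re)) := by
  have := @continuous_hermOf N
  unfold action
  fun_prop

open scoped Matrix.Norms.Frobenius

theorem norm_actionLowerOrder_le (Φ : Matrix (Fin N) (Fin N) ℂ) :
    ‖actionLowerOrder N lam kap Ev Φ‖
      ≤ (‖Emat N Ev‖ + |kap| + ‖Mmat N Ev‖ ^ 2 + Real.sqrt lam * ‖Mmat N Ev‖)
        * (‖Φ‖ + ‖Φ‖ ^ 2 + ‖Φ‖ ^ 3) := by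
  have hΦ2 : ‖Φ ^ 2‖ ≤ ‖Φ‖ ^ 2 := norm_pow_le' Φ two_pos
  have hΦ3 : ‖Φ ^ 3‖ ≤ ‖Φ‖ ^ 3 := norm_pow_le' Φ three_pos
  have hMΦMΦ : ‖Mmat N Ev * Φ * Mmat N Ev * Φ‖ ≤ ‖Mmat N Ev‖ ^ 2 * ‖Φ‖ ^ 2 :=
    calc _ ≤ ‖Mmat N Ev‖ * ‖Φ‖ * ‖Mmat N Ev‖ * ‖Φ‖ := by
          refine (norm_mul_le _ _).trans ?_
          gcongr
          refine (norm_mul_le _ _).trans ?_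
          gcongr
          exact norm_mul_le _ _
      _ = _ := by ring
  calc _ ≤ ‖Emat N Ev‖ * ‖Φ‖ ^ 2 + |kap| * ‖Φ‖ + 1 / 2 * (‖Mmat N Ev‖ ^ 2 * ‖Φ‖ ^ 2)
        + Real.sqrt lam * (‖Mmat N Ev‖ * ‖Φ‖ ^ 3) := by
        refine (norm_add_le _ _).trans (add_le_add ?_ ?_)
        · refine (norm_add_le _ _).trans (add_le_add ?_ ?_)
          · refine (norm_add_le _ _).trans (add_le_add ?_ ?_)
            · exact (norm_mul_le _ _).trans (by gcongr)
            · simp [norm_smul]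
          · simpa [norm_smul] using hMΦMΦ
        · rw [norm_smul, Complex.norm_real, Real.norm_of_nonneg (Real.sqrt_nonneg _)]
          gcongr
          exact (norm_mul_le _ _).trans (by gcongr)
    _ ≤ _ := by
        nlinarith [norm_nonneg Φ, norm_nonneg (Emat N Ev), norm_nonneg (Mmat N Ev), abs_nonneg kap,
          pow_nonneg (norm_nonneg Φ) 3, sq_nonneg ‖Φ‖,
          mul_nonneg (Real.sqrt_nonneg lam) (norm_nonneg (Mmat N Ev))]

theorem exists_exponent_le_sub_mul_norm_pow_four (hV : 0 < Vc) (hlam : 0 < lam) :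
    ∃ C α : ℝ, 0 < α ∧ ∀ Φ : Matrix (Fin N) (Fin N) ℂ, Φ.IsHermitian →
      -action N Vc lam kap Ev Φ + Vc * (trace (J * Φ)).re ≤ C - α * ‖Φ‖ ^ 4 := by
  set K := ‖Emat N Ev‖ + |kap| + ‖Mmat N Ev‖ ^ 2 + Real.sqrt lam * ‖Mmat N Ev‖ + ‖J‖
  set α := Vc * lam / 4 / ((N : ℝ) ^ 2 + 1) / 2
  have hα : 0 < α := by positivity
  obtain ⟨C, hC⟩ := exists_mul_add_le_add_mul_pow_four (B := Vc * N * K) (L := α)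
    (by positivity) hα
  refine ⟨C, α, hα, fun Φ hΦ => ?_⟩
  set r := ‖Φ‖
  set Y := actionLowerOrder N lam kap Ev Φ - J * Φ
  have h_lower : -(trace Y).re ≤ N * (K * (r + r ^ 2 + r ^ 3)) :=
    calc -(trace Y).re ≤ ‖trace Y‖ := (neg_le_abs _).trans (Complex.abs_re_le_norm _)
      _ ≤ Fintype.card (Fin N) * ‖Y‖ := norm_trace_le_card_mul_frobenius_norm Y
      _ ≤ N * (K * (r + r ^ 2 + r ^ 3)) := by
          rw [Fintype.card_fin]
          gcongr
          refine (norm_sub_le _ _).trans ?_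
          nlinarith [norm_actionLowerOrder_le lam kap Ev Φ, norm_mul_le J Φ, norm_nonneg J,
            sq_nonneg r, pow_nonneg (norm_nonneg Φ) 3]
  have h_quartic : r ^ 4 ≤ ((N : ℝ) ^ 2 + 1) * (trace (Φ ^ 4)).re := by
    have h_sq : r ^ 2 ≤ N * ‖Φ ^ 2‖ := by simpa using hΦ.frobenius_norm_sq_le
    have h_four : (trace (Φ ^ 4)).re = ‖Φ ^ 2‖ ^ 2 := hΦ.re_trace_pow_four
    nlinarith [sq_nonneg r, sq_nonneg ‖Φ ^ 2‖]
  have h_coeff : 2 * α * (((N : ℝ) ^ 2 + 1) * (trace (Φ ^ 4)).re)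
      = Vc * lam / 4 * (trace (Φ ^ 4)).re := by
    simp only [α]; field_simp
  have h_split : -action N Vc lam kap Ev Φ + Vc * (trace (J * Φ)).re
      = Vc * -(trace Y).re - Vc * lam / 4 * (trace (Φ ^ 4)).re := by
    rw [action_eq, trace_sub, Complex.sub_re]; ring
  nlinarith [mul_le_mul_of_nonneg_left h_lower hV.le,
    mul_le_mul_of_nonneg_left h_quartic (by positivity : 0 ≤ 2 * α), hC r (norm_nonneg Φ)]

theorem norm_le_frobenius_norm_hermOf (c : HCoords N) : ‖c‖ ≤ ‖hermOf c‖ := by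
  refine norm_prod_le_iff.2 ⟨(pi_norm_le_iff_of_nonneg (norm_nonneg _)).2 fun i => ?_,
    (pi_norm_le_iff_of_nonneg (norm_nonneg _)).2 fun p => ?_⟩
  · simpa [hermOf] using norm_apply_le_frobenius_norm (hermOf c) i i
  · simpa [hermOf, p.2] using norm_apply_le_frobenius_norm (hermOf c) p.1.1 p.1.2

theorem exists_exponent_hermOf_le (hV : 0 < Vc) (hlam : 0 < lam) :
    ∃ C α : ℝ, 0 < α ∧ ∀ c : HCoords N,
      -action N Vc lam kap Ev (hermOf c) + Vc * (trace (J * hermOf c)).re ≤ C - α * ‖c‖ ^ 4 := by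
  obtain ⟨C, α, hα, h⟩ := exists_exponent_le_sub_mul_norm_pow_four Vc lam kap Ev J hV hlam
  refine ⟨C, α, hα, fun c => (h _ (hermOf_isHermitian c)).trans ?_⟩
  gcongr
  exact norm_le_frobenius_norm_hermOf c

end Exponent

theorem partition_function_integrable_general
    (N : ℕ) (Vc lam kap : ℝ) (hV : 0 < Vc) (hlam : 0 < lam)
    (Ev : Fin N → ℝ)
    (J : Matrix (Fin N) (Fin N) ℂ) :
    Integrable (fun c : HCoords N =>
      Real.exp (- action N Vc lam kap Ev (hermOf c)
        + Vc * (Matrix.trace (J * hermOf c)).re)) := by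
  obtain ⟨C, α, hα, h_exponent⟩ := exists_exponent_hermOf_le Vc lam kap Ev J hV hlam
  have h_dom : Integrable (fun c : HCoords N => Real.exp C * Real.exp (-α * ‖c‖ ^ 4)) := by
    simpa only [Real.rpow_ofNat] using
      (integrable_exp_neg_mul_norm_rpow _ hα four_pos).const_mul (Real.exp C)
  refine h_dom.mono' (continuous_exp_neg_action_add Vc lam kap Ev J).aestronglyMeasurable
    (.of_forall fun c => ?_)
  rw [Real.norm_of_nonneg (Real.exp_pos _).le, ← Real.exp_add]
  exact Real.exp_le_exp.2 ((h_exponent c).trans_eq (by ring))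

/-- For every Hermitian `J`, the integrand of the partition function,
as a function of the real coordinates of the Hermitian matrix `Φ`, is Lebesgue
integrable, so `Z[J]` is a well-defined finite real number. -/
theorem partition_function_integrable
    (N : ℕ) (hN : 1 ≤ N) (Vc lam kap : ℝ) (hV : 0 < Vc) (hlam : 0 < lam)
    (Ev : Fin N → ℝ) (hE : ∀ i, 0 < Ev i)
    (J : Matrix (Fin N) (Fin N) ℂ) (hJ : J.IsHermitian) :
    Integrable (fun c : HCoords N =>
      Real.exp (- action N Vc lam kap Ev (hermOf c)
        + Vc * (Matrix.trace (J * hermOf c)).re)) :=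
  partition_function_integrable_general N Vc lam kap hV hlam Ev J
end
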